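/- Let B be a 1-symmetric convex body in ℝⁿ (n ≥ 2) with ‖eᵢ‖_B = 1, and let x ∈ ∂B have all coordinates nonzero with |xₙ| ≤ |xᵢ| for all i. If v ∈ G(B,x) satisfies vᵢ = 0 for all i ≤ n−1, then |xₙ| ≥ 1; hence |xᵢ| ≥ 1 for all i, which forces B = [−1,1]ⁿ given B ⊆ [−1,1]ⁿ. -/

import Mathlib

/-! The normal `v` only sees the last coordinate, so testing it against `±eₙ ∈ B` gives
`±vₙ ≤ vₙ xₙ`, whence `|xₙ| ≥ 1`. Minimality of `|xₙ|` and `B ⊆ [-1,1]ⁿ` then make `x` a vertex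
of the cube; by sign symmetry every vertex lies in `B`, and the cube is their convex hull. -/

open scoped BigOperators

/-- A 1-symmetric convex body: a compact convex set with nonempty interior that is
invariant under coordinate sign changes and coordinate permutations. -/
def IsSymBody (n : ℕ) (B : Set (Fin n → ℝ)) : Prop :=
  IsCompact B ∧ Convex ℝ B ∧ (interior B).Nonempty ∧
    ∀ x ∈ B, ∀ ε : Fin n → ℝ, (∀ i, ε i = 1 ∨ ε i = -1) →
      ∀ σ : Equiv.Perm (Fin n), (fun i => ε i * x (σ i)) ∈ B

/-- The Gauss image of `B` at `x`: the set of unit outer normal vectors at `x`. -/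
def gaussImage {n : ℕ} (B : Set (Fin n → ℝ)) (x : Fin n → ℝ) : Set (Fin n → ℝ) :=
  {v | (∑ i, (v i) ^ 2 = 1) ∧ ∀ y ∈ B, (∑ i, v i * (y i - x i)) ≤ 0}

/-- The boundary point `x` of `B` is illuminated in direction `y`. -/
def Illuminates {n : ℕ} (y x : Fin n → ℝ) (B : Set (Fin n → ℝ)) : Prop :=
  ∃ ε : ℝ, 0 < ε ∧ x + ε • y ∈ interior B

open Set Topology

namespace IsSymBody

variable {n : ℕ} {B : Set (Fin n → ℝ)}

theorem mem_of_abs_eq (hB : IsSymBody n B) {x g : Fin n → ℝ} (hx : x ∈ B)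
    (hg : ∀ i, |g i| = |x i|) : g ∈ B := by
  classical
  have key := hB.2.2.2 x hx (fun i => if g i = x i then 1 else -1)
    (fun i => by split_ifs <;> simp) (Equiv.refl _)
  convert key using 1
  funext i
  by_cases h : g i = x i
  · simp [h]
  · simp [(abs_eq_abs.mp (hg i)).resolve_left h]

theorem neg_mem (hB : IsSymBody n B) {x : Fin n → ℝ} (hx : x ∈ B) : -x ∈ B :=
  hB.mem_of_abs_eq hx fun i => by simp

theorem zero_mem_interior (hB : IsSymBody n B) : (0 : Fin n → ℝ) ∈ interior B := by
  obtain ⟨z, hz⟩ := hB.2.2.1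
  have hneg : -interior B ⊆ interior B := by
    refine interior_maximal (fun y hy => ?_) isOpen_interior.neg
    simpa using hB.neg_mem (interior_subset hy)
  simpa using hB.2.1.interior hz (hneg (neg_mem_neg.mpr hz)) (a := 1 / 2) (b := 1 / 2)
    (by norm_num) (by norm_num) (by norm_num)

theorem mem_of_gauge_le_one (hB : IsSymBody n B) {y : Fin n → ℝ} (hy : gauge B y ≤ 1) :
    y ∈ B := by
  have hnhds : B ∈ 𝓝 0 := mem_interior_iff_mem_nhds.mp hB.zero_mem_interior
  simpa [hB.1.isClosed.closure_eq] using (gauge_le_one_iff_mem_closure hB.2.1 hnhds).mp hy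

end IsSymBody

theorem Set.Icc_eq_convexHull_pi_pair {ι : Type*} [Finite ι] {a b : ι → ℝ} (hab : a ≤ b) :
    Icc a b = convexHull ℝ (univ.pi fun i => {a i, b i}) := by
  simp only [convexHull_pi, convexHull_pair, segment_eq_Icc (hab _), pi_univ_Icc]

theorem IsSymBody.eq_Icc_of_one_le_abs {n : ℕ} {B : Set (Fin n → ℝ)} (hB : IsSymBody n B)
    (hsub : B ⊆ Icc (fun _ => (-1 : ℝ)) (fun _ => 1)) {x : Fin n → ℝ} (hx : x ∈ B)
    (hx1 : ∀ i, 1 ≤ |x i|) : B = Icc (fun _ => (-1 : ℝ)) (fun _ => 1) := by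
  have habs : ∀ i, |x i| = 1 := fun i =>
    le_antisymm (abs_le.mpr ⟨(hsub hx).1 i, (hsub hx).2 i⟩) (hx1 i)
  refine hsub.antisymm ?_
  rw [Icc_eq_convexHull_pi_pair (fun _ => by norm_num)]
  refine convexHull_min (fun g hg => hB.mem_of_abs_eq hx fun i => ?_) hB.2.1
  obtain h | h : g i = -1 ∨ g i = 1 := hg i (mem_univ i)
  all_goals simp [h, habs]

theorem one_le_abs_of_mem_gaussImage {n : ℕ} {B : Set (Fin n → ℝ)} {x v : Fin n → ℝ}
    (hv : v ∈ gaussImage B x) {k : Fin n} (hvk : ∀ i ≠ k, v i = 0)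
    (hk : Pi.single k 1 ∈ B) (hk' : -Pi.single k 1 ∈ B) : 1 ≤ |x k| := by
  have hsum (w : Fin n → ℝ) : ∑ i, v i * w i = v k * w k :=
    Finset.sum_eq_single k (fun i _ hi => by simp [hvk i hi]) (by simp)
  have hv0 : v k ≠ 0 := fun h0 => by
    have hv1 := (hsum v).symm.trans (by simpa only [sq] using hv.1)
    simp [h0] at hv1
  have h_single : v k * (1 - x k) ≤ 0 := by simpa using (hsum _).symm.trans_le (hv.2 _ hk)
  have h_neg_single : v k * (-1 - x k) ≤ 0 := by
    simpa using (hsum _).symm.trans_le (hv.2 _ hk')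
  have hvx : |v k| ≤ v k * x k := abs_le'.mpr ⟨by linarith, by linarith⟩
  refine le_of_mul_le_mul_left ?_ (abs_pos.mpr hv0)
  calc |v k| * 1 ≤ v k * x k := by rwa [mul_one]
    _ ≤ |v k| * |x k| := (le_abs_self _).trans (abs_mul _ _).le

theorem statement_18 (n : ℕ) (hn : 2 ≤ n) (B : Set (Fin n → ℝ)) (hB : IsSymBody n B)
    (hnorm : ∀ i, gauge B (Pi.single i (1 : ℝ)) = 1)
    (hsub : B ⊆ Set.Icc (fun _ => (-1 : ℝ)) (fun _ => 1))
    (x : Fin n → ℝ) (hx : x ∈ frontier B)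
    (hxn : ∀ i, |x ⟨n - 1, by omega⟩| ≤ |x i|)
    (v : Fin n → ℝ) (hv : v ∈ gaussImage B x)
    (hv0 : ∀ i : Fin n, (i : ℕ) < n - 1 → v i = 0) :
    1 ≤ |x ⟨n - 1, by omega⟩| ∧ (∀ i, 1 ≤ |x i|) ∧
      B = Set.Icc (fun _ => (-1 : ℝ)) (fun _ => 1) := by
  set N : Fin n := ⟨n - 1, by omega⟩
  have hxB : x ∈ B := hB.1.isClosed.frontier_subset hx
  have hN : Pi.single N 1 ∈ B := hB.mem_of_gauge_le_one (hnorm N).le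
  have hvN : ∀ i ≠ N, v i = 0 := fun i hi =>
    hv0 i (by have : (i : ℕ) ≠ n - 1 := Fin.val_ne_of_ne hi; omega)
  have hxN : 1 ≤ |x N| := one_le_abs_of_mem_gaussImage hv hvN hN (hB.neg_mem hN)
  have hx1 : ∀ i, 1 ≤ |x i| := fun i => hxN.trans (hxn i)
  exact ⟨hxN, hx1, hB.eq_Icc_of_one_le_abs hsub hxB hx1⟩
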